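/- Merging equal seepage rates by similarity (Appendix B, corrected): let n ≥ 2, let p_1,…,p_n and q_1,…,q_n be reals, and let i ∈ {1,…,n−1} satisfy q_i = q_{i+1}. Let A be the (n+1)×(n+1) real matrix equal to the identity except that A_{i,i} = 1, A_{i,i+1} = 1, A_{i+1,i} = p_{i+1}, A_{i+1,i+1} = −p_i. Define p' by p'_i = p_i + p_{i+1}, p'_{i+1} = 0 and p'_j = p_j for j ∉ {i, i+1}, and let Q'' be the matrix obtained from Q(p', q) by replacing its (0, i+1) entry 2q_{i+1} with 0. Then A · Q(p,q) = Q'' · A; in particular, if p_i + p_{i+1} ≠ 0 then A is invertible and Q(p,q) is similar to Q''. -/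
import Mathlib


open Matrix Finset

noncomputable section

/-- The (n+1)×(n+1) single-site leakage transition matrix Q(p,q): rows and columns
indexed by 0,1,…,n, with Q₀₀ = 1 − ∑ᵢ pᵢ, Q₀ᵢ = 2qᵢ, Qᵢ₀ = pᵢ, Qᵢᵢ = 1 − 2qᵢ and
Qᵢⱼ = 0 for distinct i, j ≥ 1. -/
def Qmat {n : ℕ} (p q : Fin n → ℝ) : Matrix (Fin (n + 1)) (Fin (n + 1)) ℝ :=
  Matrix.of fun a b =>
    Fin.cases (motive := fun _ => ℝ)
      (Fin.cases (motive := fun _ => ℝ) (1 - ∑ i, p i) (fun j => 2 * q j) b)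
      (fun i =>
        Fin.cases (motive := fun _ => ℝ) (p i)
          (fun j => if i = j then 1 - 2 * q i else 0) b)
      a

/-- The matrix A: the identity except A_{i,i} = 1, A_{i,i+1} = 1,
A_{i+1,i} = p_{i+1}, A_{i+1,i+1} = −p_i (here `i i' : Fin n` label the rows/columns
i.succ and i'.succ of the (n+1)×(n+1) matrix, with i' = i+1). -/
def Amat {n : ℕ} (p : Fin n → ℝ) (i i' : Fin n) :
    Matrix (Fin (n + 1)) (Fin (n + 1)) ℝ :=
  Matrix.of fun a b =>
    if a = i.succ then (if b = i.succ then 1 else if b = i'.succ then 1 else 0)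
    else if a = i'.succ then
      (if b = i.succ then p i' else if b = i'.succ then -p i else 0)
    else if a = b then 1 else 0

/-- The merged leak vector p': p'_i = p_i + p_{i+1}, p'_{i+1} = 0, p'_j = p_j
otherwise. -/
def pMerged {n : ℕ} (p : Fin n → ℝ) (i i' : Fin n) : Fin n → ℝ :=
  fun j => if j = i then p i + p i' else if j = i' then 0 else p j

/-- The matrix Q'' obtained from Q(p', q) by replacing its (0, i+1) entry
2q_{i+1} with 0. -/
def Qmerged {n : ℕ} (p q : Fin n → ℝ) (i i' : Fin n) :
    Matrix (Fin (n + 1)) (Fin (n + 1)) ℝ :=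
  Matrix.of fun a b =>
    if a = 0 ∧ b = i'.succ then 0 else Qmat (pMerged p i i') q a b

lemma A_mul {n : ℕ} (p : Fin n → ℝ) (i i' : Fin n) (hne : i ≠ i')
    (M : Matrix (Fin (n + 1)) (Fin (n + 1)) ℝ) (a b : Fin (n + 1)) :
    (Amat p i i' * M) a b =
      if a = i.succ then M i.succ b + M i'.succ b
      else if a = i'.succ then p i' * M i.succ b - p i * M i'.succ b
      else M a b := by
  have hs : i.succ ≠ i'.succ := fun hc => hne (Fin.succ_injective _ hc)
  rw [Matrix.mul_apply]
  by_cases ha : a = i.succ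
  · subst ha
    rw [show (∑ c, Amat p i i' i.succ c * M c b) =
        ∑ c ∈ ({i.succ, i'.succ} : Finset _), Amat p i i' i.succ c * M c b from
      (Finset.sum_subset (Finset.subset_univ _) ?_).symm, Finset.sum_pair hs]
    · simp [Amat, hs, hs.symm]
    · intro c _ hc
      simp only [Finset.mem_insert, Finset.mem_singleton, not_or] at hc
      simp [Amat, hc.1, hc.2]
  · by_cases ha' : a = i'.succ
    · subst ha'
      rw [show (∑ c, Amat p i i' i'.succ c * M c b) =
          ∑ c ∈ ({i.succ, i'.succ} : Finset _), Amat p i i' i'.succ c * M c b from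
        (Finset.sum_subset (Finset.subset_univ _) ?_).symm, Finset.sum_pair hs]
      · simp [Amat, hs, hs.symm, ha]
        ring
      · intro c _ hc
        simp only [Finset.mem_insert, Finset.mem_singleton, not_or] at hc
        simp [Amat, hc.1, hc.2, hne.symm]
    · simp only [if_neg ha, if_neg ha']
      rw [Finset.sum_eq_single a]
      · simp [Amat, ha, ha']
      · intro c _ hc
        simp [Amat, ha, ha', Ne.symm hc]
      · simp

lemma mul_A {n : ℕ} (p : Fin n → ℝ) (i i' : Fin n) (hne : i ≠ i')
    (M : Matrix (Fin (n + 1)) (Fin (n + 1)) ℝ) (a b : Fin (n + 1)) :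
    (M * Amat p i i') a b =
      if b = i.succ then M a i.succ + p i' * M a i'.succ
      else if b = i'.succ then M a i.succ - p i * M a i'.succ
      else M a b := by
  have hs : i.succ ≠ i'.succ := fun hc => hne (Fin.succ_injective _ hc)
  rw [Matrix.mul_apply]
  by_cases hb : b = i.succ
  · subst hb
    rw [show (∑ c, M a c * Amat p i i' c i.succ) =
        ∑ c ∈ ({i.succ, i'.succ} : Finset _), M a c * Amat p i i' c i.succ from
      (Finset.sum_subset (Finset.subset_univ _) ?_).symm, Finset.sum_pair hs]
    · simp [Amat, hs, hs.symm]
      ring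
    · intro c _ hc
      simp only [Finset.mem_insert, Finset.mem_singleton, not_or] at hc
      simp [Amat, hc.1, hc.2, Ne.symm hc.1]
  · by_cases hb' : b = i'.succ
    · subst hb'
      rw [show (∑ c, M a c * Amat p i i' c i'.succ) =
          ∑ c ∈ ({i.succ, i'.succ} : Finset _), M a c * Amat p i i' c i'.succ from
        (Finset.sum_subset (Finset.subset_univ _) ?_).symm, Finset.sum_pair hs]
      · simp [Amat, hs, hs.symm]
        ring
      · intro c _ hc
        simp only [Finset.mem_insert, Finset.mem_singleton, not_or] at hc
        simp [Amat, hc.1, hc.2, hs.symm, Ne.symm hc.2]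
    · rw [Finset.sum_eq_single b]
      · simp [Amat, hb, hb', Ne.symm hb, Ne.symm hb']
      · intro c _ hc
        by_cases h1 : c = i.succ
        · subst h1; simp [Amat, hb, hb', hs, hc]
        · by_cases h2 : c = i'.succ
          · subst h2; simp [Amat, hb, hb', hs, h1, hc]
          · simp [Amat, h1, h2, hc]
      · simp

def Bmat {n : ℕ} (p : Fin n → ℝ) (i i' : Fin n) :
    Matrix (Fin (n + 1)) (Fin (n + 1)) ℝ :=
  Matrix.of fun a b =>
    if a = i.succ then
      (if b = i.succ then p i / (p i + p i') else
        if b = i'.succ then 1 / (p i + p i') else 0)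
    else if a = i'.succ then
      (if b = i.succ then p i' / (p i + p i') else
        if b = i'.succ then -(1 / (p i + p i')) else 0)
    else if a = b then 1 else 0

lemma A_mul_B {n : ℕ} (p : Fin n → ℝ) (i i' : Fin n) (hne : i ≠ i')
    (hs : p i + p i' ≠ 0) : Amat p i i' * Bmat p i i' = 1 := by
  have hss : i.succ ≠ i'.succ := fun hc => hne (Fin.succ_injective _ hc)
  ext a b
  rw [A_mul p i i' hne]
  by_cases ha : a = i.succ
  · subst ha
    by_cases hb : b = i.succ
    · subst hb
      simp [Bmat, hss, hss.symm, Matrix.one_apply]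
      field_simp
    · by_cases hb' : b = i'.succ
      · subst hb'
        simp [Bmat, hss, hss.symm, Matrix.one_apply]
      · simp [Bmat, hss, hss.symm, hb, hb', Matrix.one_apply, Ne.symm hb]
  · by_cases ha' : a = i'.succ
    · subst ha'
      by_cases hb : b = i.succ
      · subst hb
        simp [Bmat, ha, hss, hss.symm, Matrix.one_apply, hss]
        ring_nf
      · by_cases hb' : b = i'.succ
        · subst hb'
          simp [Bmat, ha, hss, hss.symm, Matrix.one_apply]
          field_simp
          ring
        · simp [Bmat, ha, hss, hss.symm, hb, hb', Matrix.one_apply, Ne.symm hb']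
    · rw [if_neg ha, if_neg ha']
      by_cases hab : a = b
      · subst hab; simp [Bmat, ha, ha', Matrix.one_apply]
      · simp [Bmat, ha, ha', hab, Matrix.one_apply]

lemma sum_pMerged {n : ℕ} (p : Fin n → ℝ) (i i' : Fin n) (hne : i ≠ i') :
    ∑ j, pMerged p i i' j = ∑ j, p j := by
  classical
  have hsub : ({i, i'} : Finset (Fin n)) ⊆ univ := subset_univ _
  rw [← Finset.sum_sdiff hsub (f := pMerged p i i'), ← Finset.sum_sdiff hsub (f := p)]
  congr 1
  · refine Finset.sum_congr rfl fun j hj => ?_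
    simp only [Finset.mem_sdiff, Finset.mem_insert, Finset.mem_singleton, not_or] at hj
    simp [pMerged, hj.2.1, hj.2.2]
  · rw [Finset.sum_pair hne, Finset.sum_pair hne]
    simp [pMerged, hne.symm]

lemma key_eq {n : ℕ} (p q : Fin n → ℝ) (i i' : Fin n) (hne : i ≠ i')
    (hq : q i = q i') :
    Amat p i i' * Qmat p q = Qmerged p q i i' * Amat p i i' := by
  have hss : i.succ ≠ i'.succ := fun hc => hne (Fin.succ_injective _ hc)
  have hsum : (∑ x, if x = i then p i + p i' else if x = i' then 0 else p x)
      = ∑ x, p x := sum_pMerged p i i' hne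
  ext a b
  rw [A_mul p i i' hne, mul_A p i i' hne]
  rcases Fin.eq_zero_or_eq_succ a with rfl | ⟨j, rfl⟩ <;>
    rcases Fin.eq_zero_or_eq_succ b with rfl | ⟨k, rfl⟩
  · simp [Qmat, Qmerged, pMerged, hsum, hss, hss.symm,
      (Fin.succ_ne_zero i).symm, (Fin.succ_ne_zero i').symm, Fin.succ_ne_zero]
  · by_cases hk : k = i
    · simp [hk, Qmat, Qmerged, pMerged, hss, hss.symm, hne, hne.symm,
        (Fin.succ_ne_zero i).symm, (Fin.succ_ne_zero i').symm, Fin.succ_ne_zero]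
    · by_cases hk' : k = i'
      · simp [hk', hq, Qmat, Qmerged, pMerged, hss, hss.symm, hne, hne.symm,
          (Fin.succ_ne_zero i).symm, (Fin.succ_ne_zero i').symm, Fin.succ_ne_zero]
      · simp [hk, hk', Qmat, Qmerged, pMerged, hss, hss.symm, hne, hne.symm,
          (Fin.succ_ne_zero i).symm, (Fin.succ_ne_zero i').symm, Fin.succ_ne_zero]
  · by_cases hj : j = i
    · simp [hj, Qmat, Qmerged, pMerged, hss, hss.symm, hne, hne.symm, Fin.succ_ne_zero,
        (Fin.succ_ne_zero i).symm, (Fin.succ_ne_zero i').symm]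
    · by_cases hj' : j = i'
      · simp [hj', Qmat, Qmerged, pMerged, hss, hss.symm, hne, hne.symm, Fin.succ_ne_zero,
          (Fin.succ_ne_zero i).symm, (Fin.succ_ne_zero i').symm]
        ring
      · simp [hj, hj', Qmat, Qmerged, pMerged, hss, hss.symm, hne, hne.symm, Fin.succ_ne_zero,
          (Fin.succ_ne_zero i).symm, (Fin.succ_ne_zero i').symm]
  · by_cases hj : j = i
    · by_cases hk : k = i
      · simp [hj, hk, Qmat, Qmerged, pMerged, hss, hss.symm, hne, hne.symm, Fin.succ_ne_zero]
      · by_cases hk' : k = i'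
        · simp [hj, hk', hq, Qmat, Qmerged, pMerged, hss, hss.symm, hne, hne.symm,
            Fin.succ_ne_zero]
        · simp [hj, hk, hk', Ne.symm hk, Ne.symm hk', Qmat, Qmerged, pMerged, hss,
            hss.symm, hne, hne.symm, Fin.succ_ne_zero]
    · by_cases hj' : j = i'
      · by_cases hk : k = i
        · simp [hj', hk, hq, Qmat, Qmerged, pMerged, hss, hss.symm, hne, hne.symm,
            Fin.succ_ne_zero]
        · by_cases hk' : k = i'
          · simp [hj', hk', hq, Qmat, Qmerged, pMerged, hss, hss.symm, hne, hne.symm,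
              Fin.succ_ne_zero]
          · simp [hj', hk, hk', Ne.symm hk, Ne.symm hk', Qmat, Qmerged, pMerged, hss,
              hss.symm, hne, hne.symm, Fin.succ_ne_zero]
      · by_cases hk : k = i
        · simp [hj, hj', hk, Ne.symm hj, Ne.symm hj', Qmat, Qmerged, pMerged, hss,
            hss.symm, hne, hne.symm, Fin.succ_ne_zero]
        · by_cases hk' : k = i'
          · simp [hj, hj', hk', Ne.symm hj, Ne.symm hj', Qmat, Qmerged, pMerged, hss,
              hss.symm, hne, hne.symm, Fin.succ_ne_zero]
          · simp [hj, hj', hk, hk', Qmat, Qmerged, pMerged, hss, hss.symm, hne,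
              hne.symm, Fin.succ_ne_zero]

/-- Merging equal seepage rates by similarity (Appendix B, corrected):
if q_i = q_{i+1} then A·Q(p,q) = Q''·A; in particular, if p_i + p_{i+1} ≠ 0 then
A is invertible and Q(p,q) = A⁻¹ Q'' A. -/
theorem merge_equal_seepage (n : ℕ) (hn : 2 ≤ n) (p q : Fin n → ℝ)
    (i : Fin n) (h : (i : ℕ) + 1 < n) (hq : q i = q ⟨(i : ℕ) + 1, h⟩) :
    Amat p i ⟨(i : ℕ) + 1, h⟩ * Qmat p q =
        Qmerged p q i ⟨(i : ℕ) + 1, h⟩ * Amat p i ⟨(i : ℕ) + 1, h⟩ ∧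
      (p i + p ⟨(i : ℕ) + 1, h⟩ ≠ 0 →
        IsUnit (Amat p i ⟨(i : ℕ) + 1, h⟩) ∧
          Qmat p q =
            (Amat p i ⟨(i : ℕ) + 1, h⟩)⁻¹ * Qmerged p q i ⟨(i : ℕ) + 1, h⟩ *
              Amat p i ⟨(i : ℕ) + 1, h⟩) := by
  have hne : i ≠ (⟨(i : ℕ) + 1, h⟩ : Fin n) := by
    intro hc
    have := congrArg Fin.val hc
    simp at this
  refine ⟨key_eq p q i _ hne hq, fun hs => ?_⟩
  have hAB := A_mul_B p i _ hne hs
  have hBA : Bmat p i ⟨(i : ℕ) + 1, h⟩ * Amat p i ⟨(i : ℕ) + 1, h⟩ = 1 :=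
    mul_eq_one_comm.mp hAB
  refine ⟨⟨⟨_, Bmat p i ⟨(i : ℕ) + 1, h⟩, hAB, hBA⟩, rfl⟩, ?_⟩
  rw [Matrix.inv_eq_right_inv hAB, Matrix.mul_assoc, ← key_eq p q i _ hne hq,
    ← Matrix.mul_assoc, hBA, Matrix.one_mul]
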